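/- Let (g,γ) be a construction pair on an abelian group (X,+), and equip ℤ × X with the multiplication (i,x)·(j,y) = (i+j, g^{−j}(x)+y+∑_{k∈I(i+j,−j)} g^{−k}(γ(x,y))). Then (0,0) is a two-sided identity element; every element u = (i,x) has the two-sided inverse u⁻¹ = (−i, −g^i(x)), i.e. u·u⁻¹ = (0,0) = u⁻¹·u; and the inverse properties u⁻¹·(u·w) = w and (w·u)·u⁻¹ = w hold for all u,w ∈ ℤ × X. -/

import Mathlib

/-!
Every value `γ x y` lies in the radical of `γ` and is 2-torsion, and (C3) gives
`g ^ n (γ x y) = γ (g ^ (-n) x) y`; by (C1), `g` is additive on translations by the radical.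
The heart of the proof is the formula
`g ^ n (a + b) = g ^ n a + g ^ n b + ∑ k ∈ I (2 * n) (-n), g ^ (-k) (γ a b)`:
(C1) is its case `n = -1`, and the exponents for which it holds are closed under addition and
negation. Since all summands are 2-torsion, sums over intervals add like
`I a b ∆ I b c = I a c`, and both cancellation laws telescope to zero.
-/

/-- The interval `I(i,j)` of integers: `∅` if `i = j`, `{i,…,j-1}` if `i < j`,
and `{j,…,i-1}` if `j < i`. -/
noncomputable def I (i j : ℤ) : Finset ℤ := Finset.Ico (min i j) (max i j)

/-- A construction pair `(g, γ)` on an abelian group `(X, +)`. -/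
structure IsConstructionPair {X : Type*} [AddCommGroup X]
    (g : Equiv.Perm X) (γ : X → X → X) : Prop where
  symm : ∀ x y, γ x y = γ y x
  alt : ∀ x, γ x x = 0
  add_left : ∀ x y z, γ (x + y) z = γ x z + γ y z
  add_right : ∀ x y z, γ x (y + z) = γ x y + γ x z
  c1 : ∀ x y, g⁻¹ (g x + g y)
      = x + y + γ x y + g⁻¹ (γ x y) + g⁻¹ (g⁻¹ (γ x y))
  c2 : ∀ x y z, γ (γ x y) z = 0
  c3 : ∀ x y, g⁻¹ (γ x y) = γ (g x) y

/-- The multiplication of `ℤ ⋉_{(g,γ)} X` on `ℤ × X`: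
`(i,x)·(j,y) = (i+j, g^{-j}(x) + y + ∑_{k ∈ I(i+j,-j)} g^{-k}(γ(x,y)))`. -/
noncomputable def cmul {X : Type*} [AddCommGroup X] (g : Equiv.Perm X) (γ : X → X → X) :
    ℤ × X → ℤ × X → ℤ × X :=
  fun u v =>
    (u.1 + v.1,
      (g ^ (-v.1)) u.2 + v.2 + ∑ k ∈ I (u.1 + v.1) (-v.1), (g ^ (-k)) (γ u.2 v.2))

open Finset

lemma I_comm (a b : ℤ) : I a b = I b a := by
  simp only [I, min_comm, max_comm]

lemma symmDiff_I_I (a b c : ℤ) : symmDiff (I a b) (I b c) = I a c := by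
  ext k
  simp only [I, mem_symmDiff, mem_Ico]
  omega

lemma sum_I_comp_add {M : Type*} [AddCommMonoid M] (f : ℤ → M) (a b s : ℤ) :
    ∑ k ∈ I a b, f (k + s) = ∑ k ∈ I (a + s) (b + s), f k := by
  rw [I, I, min_add_add_right, max_add_add_right, sum_Ico_add']

lemma Finset.sum_add_sum_eq_sum_symmDiff {ι M : Type*} [DecidableEq ι] [AddCommMonoid M]
    {f : ι → M} (hf : ∀ i, f i + f i = 0) (s t : Finset ι) :
    ∑ i ∈ s, f i + ∑ i ∈ t, f i = ∑ i ∈ symmDiff s t, f i := by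
  rw [← sum_union_inter, symmDiff_eq_sup_sdiff_inf, sup_eq_union, inf_eq_inter,
    ← sum_sdiff (inter_subset_union (s := s)), add_assoc, ← sum_add_distrib,
    sum_eq_zero fun i _ => hf i, add_zero]

lemma sum_I_add_sum_I {M : Type*} [AddCommMonoid M] {f : ℤ → M} (hf : ∀ k, f k + f k = 0)
    (a b c : ℤ) : ∑ k ∈ I a b, f k + ∑ k ∈ I b c, f k = ∑ k ∈ I a c, f k := by
  rw [sum_add_sum_eq_sum_symmDiff hf, symmDiff_I_I]

lemma Equiv.Perm.sum_I_zpow_apply_zpow_apply {α : Type*} [AddCommMonoid α] (g : Equiv.Perm α)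
    (c : α) (a b s : ℤ) :
    ∑ k ∈ I a b, (g ^ (-k)) ((g ^ s) c) = ∑ k ∈ I (a - s) (b - s), (g ^ (-k)) c := by
  simp only [sub_eq_add_neg, ← sum_I_comp_add _ _ _ (-s), neg_add, neg_neg,
    ← Equiv.Perm.mul_apply, ← zpow_add]

def ZPowAddFormula {X : Type*} [AddCommGroup X] (g : Equiv.Perm X) (γ : X → X → X) (n : ℤ) :
    Prop :=
  ∀ a b : X, (g ^ n) (a + b) = (g ^ n) a + (g ^ n) b + ∑ k ∈ I (2 * n) (-n), (g ^ (-k)) (γ a b)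

namespace IsConstructionPair

variable {X : Type*} [AddCommGroup X] {g : Equiv.Perm X} {γ : X → X → X}

def radical (h : IsConstructionPair g γ) : AddSubgroup X :=
  (AddMonoidHom.mk' γ fun x y => funext (h.add_left x y)).ker

lemma mem_radical (h : IsConstructionPair g γ) {c : X} : c ∈ h.radical ↔ ∀ z, γ c z = 0 := by
  simp [radical, funext_iff]

lemma γ_mem_radical (h : IsConstructionPair g γ) (x y : X) : γ x y ∈ h.radical :=
  h.mem_radical.2 (h.c2 x y)

lemma γ_zero_left (h : IsConstructionPair g γ) (z : X) : γ 0 z = 0 :=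
  h.mem_radical.1 h.radical.zero_mem z

lemma γ_eq_zero_of_mem_radical_right (h : IsConstructionPair g γ) {c : X} (hc : c ∈ h.radical)
    (z : X) : γ z c = 0 := by
  rw [h.symm]; exact h.mem_radical.1 hc z

lemma γ_add_self (h : IsConstructionPair g γ) (x y : X) : γ x y + γ x y = 0 := by
  have hxy := h.alt (x + y)
  rwa [h.add_left, h.add_right, h.add_right, h.alt, h.alt, h.symm y x, zero_add, add_zero] at hxy

lemma γ_neg_left (h : IsConstructionPair g γ) (x y : X) : γ (-x) y = γ x y := by
  have hx := h.add_left x (-x) y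
  rw [add_neg_cancel, h.γ_zero_left] at hx
  rw [← add_right_inj (γ x y), ← hx, h.γ_add_self]

lemma γ_neg_right (h : IsConstructionPair g γ) (x y : X) : γ x (-y) = γ x y := by
  rw [h.symm, h.γ_neg_left, h.symm]

lemma apply_γ (h : IsConstructionPair g γ) (x y : X) : g (γ x y) = γ (g⁻¹ x) y :=
  (Equiv.Perm.inv_eq_iff_eq.1 (by rw [h.c3]; exact congrArg (γ · y) (g.apply_symm_apply x))).symm

lemma apply_zero (h : IsConstructionPair g γ) : g 0 = 0 := by
  calc g 0 = g (γ 0 0) := by rw [h.alt]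
    _ = 0 := by rw [h.apply_γ, h.γ_eq_zero_of_mem_radical_right h.radical.zero_mem]

lemma zpow_apply_zero (h : IsConstructionPair g γ) (n : ℤ) : (g ^ n) 0 = 0 :=
  Equiv.Perm.zpow_apply_eq_self_of_apply_eq_self h.apply_zero n

lemma γ_zpow_apply_left (h : IsConstructionPair g γ) (n : ℤ) (x y : X) :
    γ ((g ^ n) x) y = (g ^ (-n)) (γ x y) := by
  induction n using Int.induction_on generalizing x with
  | zero => simp
  | succ n ih =>
    rw [zpow_add_one, Equiv.Perm.mul_apply, ih, ← h.c3, neg_add, zpow_add, zpow_neg_one,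
      Equiv.Perm.mul_apply]
  | pred n ih =>
    rw [zpow_sub_one, Equiv.Perm.mul_apply, ih, ← h.apply_γ, neg_sub, sub_eq_neg_add, zpow_add,
      zpow_one, Equiv.Perm.mul_apply]

lemma γ_zpow_apply_right (h : IsConstructionPair g γ) (n : ℤ) (x y : X) :
    γ x ((g ^ n) y) = (g ^ (-n)) (γ x y) := by
  rw [h.symm, h.γ_zpow_apply_left, h.symm]

lemma zpow_apply_γ_add_self (h : IsConstructionPair g γ) (n : ℤ) (x y : X) :
    (g ^ n) (γ x y) + (g ^ n) (γ x y) = 0 := by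
  rw [← neg_neg n, ← h.γ_zpow_apply_left, h.γ_add_self]

lemma zpow_apply_mem_radical (h : IsConstructionPair g γ) {c : X} (hc : c ∈ h.radical) (n : ℤ) :
    (g ^ n) c ∈ h.radical :=
  h.mem_radical.2 fun z => by rw [h.γ_zpow_apply_left, h.mem_radical.1 hc, h.zpow_apply_zero]

lemma apply_add_of_mem_radical (h : IsConstructionPair g γ) (a : X) {t : X}
    (ht : t ∈ h.radical) : g (a + t) = g a + g t := by
  have hc1 := h.c1 a t
  rw [h.γ_eq_zero_of_mem_radical_right ht, ← zpow_neg_one, h.zpow_apply_zero, h.zpow_apply_zero,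
    add_zero, add_zero, add_zero, zpow_neg_one, Equiv.Perm.inv_eq_iff_eq] at hc1
  exact hc1.symm

lemma inv_apply_add_of_mem_radical (h : IsConstructionPair g γ) (a : X) {t : X}
    (ht : t ∈ h.radical) : g⁻¹ (a + t) = g⁻¹ a + g⁻¹ t := by
  have ht' : g⁻¹ t ∈ h.radical := by simpa using h.zpow_apply_mem_radical ht (-1)
  rw [Equiv.Perm.inv_eq_iff_eq, h.apply_add_of_mem_radical _ ht']
  simp

lemma zpow_apply_add_of_mem_radical (h : IsConstructionPair g γ) (n : ℤ) (a : X) {t : X}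
    (ht : t ∈ h.radical) : (g ^ n) (a + t) = (g ^ n) a + (g ^ n) t := by
  induction n using Int.induction_on with
  | zero => simp
  | succ n ih =>
    rw [add_comm, zpow_add, zpow_one, Equiv.Perm.mul_apply, ih,
      h.apply_add_of_mem_radical _ (h.zpow_apply_mem_radical ht n)]
    simp only [Equiv.Perm.mul_apply]
  | pred n ih =>
    rw [sub_eq_neg_add, zpow_add, zpow_neg_one, Equiv.Perm.mul_apply, ih,
      h.inv_apply_add_of_mem_radical _ (h.zpow_apply_mem_radical ht _)]
    simp only [Equiv.Perm.mul_apply]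

lemma zpow_apply_sum_of_mem_radical {ι : Type*} (h : IsConstructionPair g γ) (n : ℤ)
    (s : Finset ι) {f : ι → X} (hf : ∀ i ∈ s, f i ∈ h.radical) :
    (g ^ n) (∑ i ∈ s, f i) = ∑ i ∈ s, (g ^ n) (f i) := by
  induction s using Finset.cons_induction with
  | empty => simp [h.zpow_apply_zero]
  | cons i s hi ih =>
    rw [sum_cons, sum_cons, add_comm,
      h.zpow_apply_add_of_mem_radical _ _ (hf i (mem_cons_self i s)),
      ih fun j hj => hf j (mem_cons_of_mem hj), add_comm]

lemma zpow_apply_sum_I (h : IsConstructionPair g γ) {c : X} (hc : c ∈ h.radical) (m a b : ℤ) :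
    (g ^ m) (∑ k ∈ I a b, (g ^ (-k)) c) = ∑ k ∈ I (a - m) (b - m), (g ^ (-k)) c := by
  rw [h.zpow_apply_sum_of_mem_radical _ _ fun k _ => h.zpow_apply_mem_radical hc _,
    ← g.sum_I_zpow_apply_zpow_apply]
  simp only [Equiv.Perm.zpow_apply_comm]

lemma sum_I_zpow_apply_γ_add_sum_I (h : IsConstructionPair g γ) (x y : X) (a b c : ℤ) :
    ∑ k ∈ I a b, (g ^ (-k)) (γ x y) + ∑ k ∈ I b c, (g ^ (-k)) (γ x y)
      = ∑ k ∈ I a c, (g ^ (-k)) (γ x y) :=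
  sum_I_add_sum_I (fun k => h.zpow_apply_γ_add_self (-k) x y) a b c

lemma sum_zpow_apply_γ_add_self (h : IsConstructionPair g γ) (x y : X) (s : Finset ℤ) :
    ∑ k ∈ s, (g ^ (-k)) (γ x y) + ∑ k ∈ s, (g ^ (-k)) (γ x y) = 0 := by
  rw [← sum_add_distrib]
  exact sum_eq_zero fun k _ => h.zpow_apply_γ_add_self _ x y

lemma zpowAddFormula_add (h : IsConstructionPair g γ) {m n : ℤ} (hm : ZPowAddFormula g γ m)
    (hn : ZPowAddFormula g γ n) : ZPowAddFormula g γ (m + n) := by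
  intro a b
  have hS := h.zpow_apply_mem_radical (h.γ_mem_radical a b)
  calc (g ^ (m + n)) (a + b)
      = (g ^ m) ((g ^ n) a + (g ^ n) b) + (g ^ m) (∑ k ∈ I (2 * n) (-n), (g ^ (-k)) (γ a b)) := by
        rw [zpow_add, Equiv.Perm.mul_apply, hn,
          h.zpow_apply_add_of_mem_radical _ _ (sum_mem fun k _ => hS _)]
    _ = (g ^ (m + n)) a + (g ^ (m + n)) b + (∑ k ∈ I (2 * (m + n)) (2 * n - m), (g ^ (-k)) (γ a b)
          + ∑ k ∈ I (2 * n - m) (-(m + n)), (g ^ (-k)) (γ a b)) := by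
        rw [hm, h.γ_zpow_apply_left, h.γ_zpow_apply_right, g.sum_I_zpow_apply_zpow_apply,
          g.sum_I_zpow_apply_zpow_apply, h.zpow_apply_sum_I (h.γ_mem_radical a b), zpow_add,
          Equiv.Perm.mul_apply, Equiv.Perm.mul_apply, add_assoc]
        congr 4 <;> ring
    _ = _ := by rw [h.sum_I_zpow_apply_γ_add_sum_I]

lemma zpowAddFormula_neg (h : IsConstructionPair g γ) {n : ℤ} (hn : ZPowAddFormula g γ n) :
    ZPowAddFormula g γ (-n) := by
  intro a b
  have hab := hn ((g ^ (-n)) a) ((g ^ (-n)) b)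
  simp only [← Equiv.Perm.mul_apply, ← zpow_add, add_neg_cancel, zpow_zero,
    Equiv.Perm.one_apply] at hab
  rw [h.γ_zpow_apply_left, h.γ_zpow_apply_right, g.sum_I_zpow_apply_zpow_apply,
    g.sum_I_zpow_apply_zpow_apply] at hab
  have hsum : (g ^ (-n)) a + (g ^ (-n)) b
      = (g ^ (-n)) (a + b) + ∑ k ∈ I (2 * -n) (- -n), (g ^ (-k)) (γ a b) :=
    calc (g ^ (-n)) a + (g ^ (-n)) b = (g ^ (-n)) ((g ^ n) ((g ^ (-n)) a + (g ^ (-n)) b)) := by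
          rw [← Equiv.Perm.mul_apply, ← zpow_add, neg_add_cancel, zpow_zero, Equiv.Perm.one_apply]
      _ = _ := by
          rw [hab, h.zpow_apply_add_of_mem_radical _ _ (sum_mem fun k _ =>
            h.zpow_apply_mem_radical (h.γ_mem_radical a b) _), h.zpow_apply_sum_I
            (h.γ_mem_radical a b), I_comm]
          congr 3 <;> ring
  rw [hsum, add_assoc, h.sum_zpow_apply_γ_add_self, add_zero]

lemma zpowAddFormula_neg_one (h : IsConstructionPair g γ) : ZPowAddFormula g γ (-1) := by
  intro a b
  have hc1 := h.c1 ((g ^ (-1 : ℤ)) a) ((g ^ (-1 : ℤ)) b)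
  rw [h.γ_zpow_apply_left, h.γ_zpow_apply_right] at hc1
  simp only [← zpow_neg_one, ← Equiv.Perm.mul_apply, ← zpow_add] at hc1
  rw [show I (2 * -1) (- -1) = {-2, -1, 0} by decide, sum_insert (by decide),
    sum_insert (by decide), sum_singleton]
  rw [show g * g ^ (-1 : ℤ) = 1 by rw [zpow_neg_one, mul_inv_cancel], Equiv.Perm.one_apply,
    Equiv.Perm.one_apply] at hc1
  norm_num only [zpow_one, zpow_zero, Equiv.Perm.one_apply] at hc1 ⊢
  rw [hc1]
  abel

lemma zpowAddFormula (h : IsConstructionPair g γ) (n : ℤ) : ZPowAddFormula g γ n := by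
  have h_one : ZPowAddFormula g γ 1 := by simpa using h.zpowAddFormula_neg h.zpowAddFormula_neg_one
  induction n using Int.induction_on with
  | zero => intro a b; simp [I]
  | succ n ih => exact h.zpowAddFormula_add ih h_one
  | pred n ih => exact h.zpowAddFormula_add ih h.zpowAddFormula_neg_one

lemma zpow_apply_neg (h : IsConstructionPair g γ) (n : ℤ) (x : X) :
    (g ^ n) (-x) = -(g ^ n) x := by
  have hx := h.zpowAddFormula n x (-x)
  rw [add_neg_cancel, h.γ_neg_right, h.alt] at hx
  simp only [h.zpow_apply_zero, sum_const_zero, add_zero] at hx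
  exact (neg_eq_of_add_eq_zero_right hx.symm).symm

end IsConstructionPair

section cmul

variable {X : Type*} [AddCommGroup X] {g : Equiv.Perm X} {γ : X → X → X}

lemma cmul_mk (i j : ℤ) (x y : X) : cmul g γ (i, x) (j, y)
    = (i + j, (g ^ (-j)) x + y + ∑ k ∈ I (i + j) (-j), (g ^ (-k)) (γ x y)) := rfl

lemma zero_cmul (h : IsConstructionPair g γ) (u : ℤ × X) : cmul g γ (0, 0) u = u := by
  rw [← Prod.mk.eta (p := u), cmul_mk]
  simp only [h.γ_zero_left, h.zpow_apply_zero, sum_const_zero, zero_add, add_zero]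

lemma cmul_zero (h : IsConstructionPair g γ) (u : ℤ × X) : cmul g γ u (0, 0) = u := by
  rw [← Prod.mk.eta (p := u), cmul_mk]
  simp only [h.γ_eq_zero_of_mem_radical_right h.radical.zero_mem, h.zpow_apply_zero, sum_const_zero,
    neg_zero, zpow_zero, Equiv.Perm.one_apply, add_zero]

lemma cmul_inv_cancel (h : IsConstructionPair g γ) (i : ℤ) (x : X) :
    cmul g γ (i, x) (-i, -(g ^ i) x) = (0, 0) := by
  rw [cmul_mk]
  simp only [neg_neg, h.γ_neg_right, h.γ_zpow_apply_right, h.alt, h.zpow_apply_zero,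
    sum_const_zero, add_neg_cancel, add_zero]

lemma inv_cmul_cancel (h : IsConstructionPair g γ) (i : ℤ) (x : X) :
    cmul g γ (-i, -(g ^ i) x) (i, x) = (0, 0) := by
  rw [cmul_mk, h.zpow_apply_neg, ← Equiv.Perm.mul_apply, ← zpow_add, neg_add_cancel, zpow_zero,
    Equiv.Perm.one_apply]
  simp only [h.γ_neg_left, h.γ_zpow_apply_left, h.alt, h.zpow_apply_zero, sum_const_zero,
    neg_add_cancel, add_zero]

lemma inv_cmul_cancel_left (h : IsConstructionPair g γ) (i : ℤ) (x : X) (w : ℤ × X) :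
    cmul g γ (-i, -(g ^ i) x) (cmul g γ (i, x) w) = w := by
  obtain ⟨j, y⟩ := w
  set S := ∑ k ∈ I (i + j) (-j), (g ^ (-k)) (γ x y) with hS_def
  have hS : S ∈ h.radical := sum_mem fun k _ => h.zpow_apply_mem_radical (h.γ_mem_radical x y) _
  have hγ : γ (-(g ^ i) x) ((g ^ (-j)) x + y + S) = (g ^ (-i)) (γ x y) := by
    rw [h.γ_neg_left, h.add_right, h.add_right, h.γ_eq_zero_of_mem_radical_right hS,
      h.γ_zpow_apply_left, h.γ_zpow_apply_left, h.γ_zpow_apply_right, h.alt, h.zpow_apply_zero,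
      h.zpow_apply_zero, zero_add, add_zero]
  have hSS : S + S = 0 := h.sum_zpow_apply_γ_add_self x y _
  rw [cmul_mk i j, cmul_mk, hγ, g.sum_I_zpow_apply_zpow_apply, h.zpow_apply_neg,
    ← Equiv.Perm.mul_apply, ← zpow_add, show -(i + j) + i = -j by ring,
    show -i + (i + j) - -i = i + j by ring, show -(i + j) - -i = -j by ring, ← hS_def,
    add_assoc (-(g ^ (-j)) x), add_assoc _ S S, hSS, add_zero, neg_add_cancel_left,
    neg_add_cancel_left]

lemma cmul_inv_cancel_right (h : IsConstructionPair g γ) (i : ℤ) (x : X) (w : ℤ × X) :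
    cmul g γ (cmul g γ w (i, x)) (-i, -(g ^ i) x) = w := by
  obtain ⟨j, y⟩ := w
  set T := ∑ k ∈ I (j + i) (-i), (g ^ (-k)) (γ y x) with hT_def
  have hT : T ∈ h.radical := sum_mem fun k _ => h.zpow_apply_mem_radical (h.γ_mem_radical y x) _
  have hγ : γ ((g ^ (-i)) y + x + T) (-(g ^ i) x) = γ y x := by
    simp only [h.γ_neg_right, h.add_left, h.mem_radical.1 hT, h.γ_zpow_apply_left,
      h.γ_zpow_apply_right, h.alt, h.zpow_apply_zero, add_zero]
    rw [neg_neg, ← Equiv.Perm.mul_apply, ← zpow_add, add_neg_cancel, zpow_zero,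
      Equiv.Perm.one_apply]
  rw [cmul_mk j i, cmul_mk, hγ, neg_neg, ← hT_def, h.zpow_apply_add_of_mem_radical _ _ hT,
    h.zpowAddFormula i, h.zpow_apply_sum_I (h.γ_mem_radical y x), h.γ_zpow_apply_left,
    g.sum_I_zpow_apply_zpow_apply, ← Equiv.Perm.mul_apply, ← zpow_add, add_neg_cancel, zpow_zero,
    Equiv.Perm.one_apply, add_neg_cancel_right, show 2 * i - - -i = i by ring,
    show -i - - -i = -2 * i by ring, show j + i - i = j by ring, show -i - i = -2 * i by ring]
  have hB : ∑ k ∈ I j i, (g ^ (-k)) (γ y x) + ∑ k ∈ I i (-2 * i), (g ^ (-k)) (γ y x)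
      = ∑ k ∈ I j (-2 * i), (g ^ (-k)) (γ y x) :=
    h.sum_I_zpow_apply_γ_add_sum_I y x j i (-2 * i)
  congr 1
  calc _ = y + (∑ k ∈ I j (-2 * i), (g ^ (-k)) (γ y x) + (∑ k ∈ I j i, (g ^ (-k)) (γ y x)
        + ∑ k ∈ I i (-2 * i), (g ^ (-k)) (γ y x))) := by abel
    _ = y := by rw [hB, h.sum_zpow_apply_γ_add_self, add_zero]

end cmul

theorem stmt_8 {X : Type*} [AddCommGroup X] (g : Equiv.Perm X) (γ : X → X → X)
    (h : IsConstructionPair g γ) :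
    (∀ u : ℤ × X, cmul g γ ((0 : ℤ), (0 : X)) u = u ∧ cmul g γ u ((0 : ℤ), (0 : X)) = u) ∧
    (∀ (i : ℤ) (x : X),
      cmul g γ (i, x) (-i, -((g ^ i) x)) = ((0 : ℤ), (0 : X)) ∧
      cmul g γ (-i, -((g ^ i) x)) (i, x) = ((0 : ℤ), (0 : X))) ∧
    (∀ (i : ℤ) (x : X) (w : ℤ × X),
      cmul g γ (-i, -((g ^ i) x)) (cmul g γ (i, x) w) = w ∧
      cmul g γ (cmul g γ w (i, x)) (-i, -((g ^ i) x)) = w) :=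
  ⟨fun u => ⟨zero_cmul h u, cmul_zero h u⟩,
    fun i x => ⟨cmul_inv_cancel h i x, inv_cmul_cancel h i x⟩,
    fun i x w => ⟨inv_cmul_cancel_left h i x w, cmul_inv_cancel_right h i x w⟩⟩
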